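/- The first Betti number of Didi is 0: the abelianization of Γ_D is a finite group (equivalently, ℚ ⊗_ℤ (abelianization of Γ_D) is the zero vector space). -/
import Mathlib

noncomputable section

/-- Points of `ℝ³`, written as `(x, y, z)`. -/
abbrev R3 : Type := ℝ × ℝ × ℝ

/-- The translation `T_w : x ↦ x + w` of `ℝ³`, as a bijection (it is an isometry). -/
def transl (w : R3) : Equiv.Perm R3 := Equiv.addRight w

/-- The quarter-turn screw motion `τ(x,y,z) = (−y, x, z+1/2)`, as a bijection
(it is an isometry). -/
def tauE : Equiv.Perm R3 where
  toFun p := (-p.2.1, p.1, p.2.2 + 1/2)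
  invFun p := (p.2.1, -p.1, p.2.2 - 1/2)
  left_inv p := by obtain ⟨x, y, z⟩ := p; simp
  right_inv p := by obtain ⟨x, y, z⟩ := p; simp

/-- The half-turn screw motion `ρ_x(x,y,z) = (x+1/2, −y, −z)`, as a bijection
(it is an isometry). -/
def rhoxE : Equiv.Perm R3 where
  toFun p := (p.1 + 1/2, -p.2.1, -p.2.2)
  invFun p := (p.1 - 1/2, -p.2.1, -p.2.2)
  left_inv p := by obtain ⟨x, y, z⟩ := p; simp
  right_inv p := by obtain ⟨x, y, z⟩ := p; simp

/-- The half-turn screw motion `ρ_y(x,y,z) = (−x, y+1/2, 1−z)`, as a bijection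
(it is an isometry). -/
def rhoyE : Equiv.Perm R3 where
  toFun p := (-p.1, p.2.1 + 1/2, 1 - p.2.2)
  invFun p := (-p.1, p.2.1 - 1/2, 1 - p.2.2)
  left_inv p := by obtain ⟨x, y, z⟩ := p; simp
  right_inv p := by obtain ⟨x, y, z⟩ := p; simp

/-- `Γ_T`, the covering group of the tetracosm Tetra: the group generated by the
translations `T_{(1,0,0)}, T_{(0,1,0)}, T_{(0,0,2)}` and `τ`. -/
def GammaT : Subgroup (Equiv.Perm R3) :=
  Subgroup.closure {transl (1, 0, 0), transl (0, 1, 0), transl (0, 0, 2), tauE}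

/-- `Γ_D`, the covering group of the didicosm Didi: the group generated by the
translations `T_{(1,0,0)}, T_{(0,1,0)}, T_{(0,0,2)}` and `ρ_x`, `ρ_y`. -/
def GammaD : Subgroup (Equiv.Perm R3) :=
  Subgroup.closure {transl (1, 0, 0), transl (0, 1, 0), transl (0, 0, 2), rhoxE, rhoyE}

end

open scoped TensorProduct

section Aux

/-- The generating set of `Γ_D`. -/
def didiGens : Set (Equiv.Perm R3) :=
  {transl (1, 0, 0), transl (0, 1, 0), transl (0, 0, 2), rhoxE, rhoyE}

lemma gammaD_eq : GammaD = Subgroup.closure didiGens := rfl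

lemma mem_gens_mem {g : Equiv.Perm R3} (hg : g ∈ didiGens) : g ∈ GammaD :=
  Subgroup.subset_closure hg

-- membership of generators
lemma t1_mem : transl (1, 0, 0) ∈ GammaD := mem_gens_mem (by left; rfl)
lemma t2_mem : transl (0, 1, 0) ∈ GammaD := mem_gens_mem (by right; left; rfl)
lemma t3_mem : transl (0, 0, 2) ∈ GammaD := mem_gens_mem (by right; right; left; rfl)
lemma rx_mem : rhoxE ∈ GammaD := mem_gens_mem (by right; right; right; left; rfl)
lemma ry_mem : rhoyE ∈ GammaD := mem_gens_mem (by right; right; right; right; rfl)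

-- relations among the generators, as permutations
lemma rel_rx_sq : rhoxE * rhoxE = transl (1, 0, 0) := by
  ext p <;> obtain ⟨x, y, z⟩ := p <;>
    simp [rhoxE, transl, Equiv.addRight, Equiv.mul_def, Equiv.trans_apply, Prod.ext_iff] <;> ring

lemma rel_ry_sq : rhoyE * rhoyE = transl (0, 1, 0) := by
  ext p <;> obtain ⟨x, y, z⟩ := p <;>
    simp [rhoyE, transl, Equiv.addRight, Equiv.mul_def, Equiv.trans_apply, Prod.ext_iff] <;> ring

lemma transl_inv (w : R3) : (transl w)⁻¹ = transl (-w) := by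
  ext p <;>
    simp [transl, Equiv.Perm.inv_def, Equiv.addRight, sub_eq_add_neg, Prod.ext_iff]

lemma rel_conj_t1 : rhoyE * transl (1, 0, 0) * rhoyE⁻¹ = (transl (1, 0, 0))⁻¹ := by
  rw [mul_inv_eq_iff_eq_mul, transl_inv]
  ext p <;> obtain ⟨x, y, z⟩ := p <;>
    simp [rhoyE, transl, Equiv.addRight, Equiv.mul_def, Equiv.trans_apply, Prod.ext_iff] <;> ring

lemma rel_conj_t2 : rhoxE * transl (0, 1, 0) * rhoxE⁻¹ = (transl (0, 1, 0))⁻¹ := by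
  rw [mul_inv_eq_iff_eq_mul, transl_inv]
  ext p <;> obtain ⟨x, y, z⟩ := p <;>
    simp [rhoxE, transl, Equiv.addRight, Equiv.mul_def, Equiv.trans_apply, Prod.ext_iff] <;> ring

lemma rel_conj_t3 : rhoxE * transl (0, 0, 2) * rhoxE⁻¹ = (transl (0, 0, 2))⁻¹ := by
  rw [mul_inv_eq_iff_eq_mul, transl_inv]
  ext p <;> obtain ⟨x, y, z⟩ := p <;>
    simp [rhoxE, transl, Equiv.addRight, Equiv.mul_def, Equiv.trans_apply, Prod.ext_iff] <;> ring

-- In the abelianization, conjugation is trivial, so the image of any `g` with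
-- `h * g * h⁻¹ = g⁻¹` (h, g ∈ Γ_D) has order dividing 2.
lemma ab_sq_eq_one {g h : Equiv.Perm R3} (hg : g ∈ GammaD) (hh : h ∈ GammaD)
    (hrel : h * g * h⁻¹ = g⁻¹) :
    (Abelianization.of (⟨g, hg⟩ : ↥GammaD)) ^ 2 = 1 := by
  have hginv : g⁻¹ ∈ GammaD := inv_mem hg
  have hsub : (⟨h, hh⟩ : ↥GammaD) * ⟨g, hg⟩ * (⟨h, hh⟩ : ↥GammaD)⁻¹ = ⟨g⁻¹, hginv⟩ :=
    Subtype.ext hrel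
  have key : Abelianization.of (⟨g, hg⟩ : ↥GammaD) =
      Abelianization.of (⟨g⁻¹, hginv⟩ : ↥GammaD) := by
    rw [← hsub, map_mul, map_mul, map_inv, mul_right_comm, mul_inv_cancel, one_mul]
  have hco : (⟨g⁻¹, hginv⟩ : ↥GammaD) = (⟨g, hg⟩ : ↥GammaD)⁻¹ := rfl
  rw [hco, map_inv] at key
  rw [pow_two]
  nth_rewrite 1 [key]
  rw [inv_mul_cancel]

lemma torsion_gen {g : Equiv.Perm R3} (hg : g ∈ didiGens) :
    IsOfFinOrder (Abelianization.of (⟨g, mem_gens_mem hg⟩ : ↥GammaD)) := by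
  have h1 : (Abelianization.of (⟨transl (1, 0, 0), t1_mem⟩ : ↥GammaD)) ^ 2 = 1 :=
    ab_sq_eq_one t1_mem ry_mem rel_conj_t1
  have h2 : (Abelianization.of (⟨transl (0, 1, 0), t2_mem⟩ : ↥GammaD)) ^ 2 = 1 :=
    ab_sq_eq_one t2_mem rx_mem rel_conj_t2
  have h3 : (Abelianization.of (⟨transl (0, 0, 2), t3_mem⟩ : ↥GammaD)) ^ 2 = 1 :=
    ab_sq_eq_one t3_mem rx_mem rel_conj_t3
  have hx : (Abelianization.of (⟨rhoxE, rx_mem⟩ : ↥GammaD)) ^ 4 = 1 := by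
    have hsq : (⟨rhoxE, rx_mem⟩ : ↥GammaD) * ⟨rhoxE, rx_mem⟩ =
        ⟨transl (1, 0, 0), t1_mem⟩ := Subtype.ext rel_rx_sq
    calc (Abelianization.of (⟨rhoxE, rx_mem⟩ : ↥GammaD)) ^ 4
        = (Abelianization.of (⟨rhoxE, rx_mem⟩ : ↥GammaD) *
            Abelianization.of (⟨rhoxE, rx_mem⟩ : ↥GammaD)) ^ 2 := by
          rw [← pow_two, ← pow_mul]
      _ = 1 := by rw [← map_mul, hsq]; exact h1
  have hy : (Abelianization.of (⟨rhoyE, ry_mem⟩ : ↥GammaD)) ^ 4 = 1 := by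
    have hsq : (⟨rhoyE, ry_mem⟩ : ↥GammaD) * ⟨rhoyE, ry_mem⟩ =
        ⟨transl (0, 1, 0), t2_mem⟩ := Subtype.ext rel_ry_sq
    calc (Abelianization.of (⟨rhoyE, ry_mem⟩ : ↥GammaD)) ^ 4
        = (Abelianization.of (⟨rhoyE, ry_mem⟩ : ↥GammaD) *
            Abelianization.of (⟨rhoyE, ry_mem⟩ : ↥GammaD)) ^ 2 := by
          rw [← pow_two, ← pow_mul]
      _ = 1 := by rw [← map_mul, hsq]; exact h2
  rcases hg with h | h | h | h | h <;> subst h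
  · exact isOfFinOrder_iff_pow_eq_one.mpr ⟨2, two_pos, h1⟩
  · exact isOfFinOrder_iff_pow_eq_one.mpr ⟨2, two_pos, h2⟩
  · exact isOfFinOrder_iff_pow_eq_one.mpr ⟨2, two_pos, h3⟩
  · exact isOfFinOrder_iff_pow_eq_one.mpr ⟨4, by norm_num, hx⟩
  · exact isOfFinOrder_iff_pow_eq_one.mpr ⟨4, by norm_num, hy⟩

lemma gammaD_fg : Group.FG ↥GammaD := by
  rw [Group.fg_iff]
  refine ⟨(Subtype.val : ↥GammaD → Equiv.Perm R3) ⁻¹' didiGens, ?_, ?_⟩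
  · exact Subgroup.closure_closure_coe_preimage
  · have hfin : didiGens.Finite := by
      unfold didiGens
      exact (Set.finite_singleton _).insert _ |>.insert _ |>.insert _ |>.insert _
    exact hfin.preimage (Subtype.val_injective.injOn)

lemma ab_torsion : Monoid.IsTorsion (Abelianization ↥GammaD) := by
  intro x
  have hsurj : Function.Surjective (Abelianization.of (G := ↥GammaD)) :=
    fun y => Quotient.inductionOn' y fun g => ⟨g, rfl⟩
  -- top subgroup of the abelianization is the closure of the images of the generators
  have htop : (⊤ : Subgroup (Abelianization ↥GammaD)) =
      Subgroup.closure ((Abelianization.of (G := ↥GammaD)) ''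
        ((Subtype.val : ↥GammaD → Equiv.Perm R3) ⁻¹' didiGens)) := by
    have hc : Subgroup.closure ((Subtype.val : ↥GammaD → Equiv.Perm R3) ⁻¹' didiGens) =
        ⊤ := Subgroup.closure_closure_coe_preimage
    rw [← MonoidHom.map_closure, hc, ← MonoidHom.range_eq_map,
      MonoidHom.range_eq_top_of_surjective _ hsurj]
  have hx : x ∈ (⊤ : Subgroup (Abelianization ↥GammaD)) := Subgroup.mem_top x
  rw [htop] at hx
  have hle : Subgroup.closure ((Abelianization.of (G := ↥GammaD)) ''
      ((Subtype.val : ↥GammaD → Equiv.Perm R3) ⁻¹' didiGens)) ≤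
      CommGroup.torsion (Abelianization ↥GammaD) := by
    rw [Subgroup.closure_le]
    rintro _ ⟨⟨g, hg⟩, hgm, rfl⟩
    exact torsion_gen hgm
  exact hle hx

end Aux

/-- the first Betti number of Didi is 0: the abelianization of `Γ_D` is
finite; equivalently `ℚ ⊗_ℤ (abelianization of Γ_D)` is the zero vector space. -/
theorem betti_zero_didi :
    Finite (Abelianization ↥GammaD) ∧
    Subsingleton (ℚ ⊗[ℤ] Additive (Abelianization ↥GammaD)) := by
  haveI hfg : Group.FG ↥GammaD := gammaD_fg
  have hsurj : Function.Surjective (Abelianization.of (G := ↥GammaD)) :=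
    fun y => Quotient.inductionOn' y fun g => ⟨g, rfl⟩
  haveI hfgab : Group.FG (Abelianization ↥GammaD) := Group.fg_of_surjective hsurj
  have hfin : Finite (Abelianization ↥GammaD) :=
    CommGroup.finite_of_fg_torsion _ ab_torsion
  refine ⟨hfin, ?_⟩
  constructor
  intro u v
  suffices h : ∀ w : ℚ ⊗[ℤ] Additive (Abelianization ↥GammaD), w = 0 by
    rw [h u, h v]
  intro w
  induction w using TensorProduct.induction_on with
  | zero => rfl
  | tmul q a =>
    have : Finite (Additive (Abelianization ↥GammaD)) := hfin
    have ha : IsOfFinAddOrder a := isOfFinAddOrder_of_finite a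
    set n := addOrderOf a with hn
    have hnpos : 0 < n := ha.addOrderOf_pos
    have hna : (n : ℤ) • a = 0 := by
      rw [natCast_zsmul]
      exact addOrderOf_nsmul_eq_zero a
    have hq : q = (n : ℤ) • (q / n) := by
      rw [zsmul_eq_mul]
      push_cast
      field_simp
    calc q ⊗ₜ[ℤ] a = ((n : ℤ) • (q / n)) ⊗ₜ[ℤ] a := by rw [← hq]
      _ = (q / n) ⊗ₜ[ℤ] ((n : ℤ) • a) := by rw [TensorProduct.smul_tmul]
      _ = 0 := by rw [hna, TensorProduct.tmul_zero]
  | add x y hx hy => rw [hx, hy, add_zero]
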